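/- Let f : ℝ → ℝ be twice continuously differentiable and strictly convex, and let ℓ ≤ u. Define the quadratic extension g of f on [ℓ,u] by g(s) = f(s) for ℓ ≤ s ≤ u, g(s) = f(u) + f'(u)(s-u) + (1/2) f''(u)(s-u)^2 for s > u, and g(s) = f(ℓ) + f'(ℓ)(s-ℓ) + (1/2) f''(ℓ)(s-ℓ)^2 for s < ℓ. If f'' ≥ 0 on [ℓ,u] then g is convex on ℝ. -/

import Mathlib

/-!
Away from `ℓ` and `u` the extension `g` is smooth, and at the junctions the value and the first
derivative of each quadratic piece match those of `f`, so `g` is differentiable with derivative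
`f' ∘ clamp` plus the slopes `f''(ℓ) · min (s - ℓ) 0` and `f''(u) · max (s - u) 0`. Each summand
is monotone (`f'` because `f'' ≥ 0` on `[ℓ, u]`), hence `g'` is monotone and `g` is convex.
-/

/-- Quadratic extension of `f` outside `[ℓ, u]`. -/
noncomputable def quadExt (f : ℝ → ℝ) (ℓ u : ℝ) (s : ℝ) : ℝ :=
  if s < ℓ then
    f ℓ + deriv f ℓ * (s - ℓ) + (1 / 2) * deriv (deriv f) ℓ * (s - ℓ) ^ 2
  else if s ≤ u then f s
  else f u + deriv f u * (s - u) + (1 / 2) * deriv (deriv f) u * (s - u) ^ 2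

open Set

noncomputable def quadExtDeriv (f : ℝ → ℝ) (ℓ u : ℝ) (s : ℝ) : ℝ :=
  deriv f (max ℓ (min s u)) + deriv (deriv f) ℓ * min (s - ℓ) 0
    + deriv (deriv f) u * max (s - u) 0

theorem hasDerivAt_quadratic (c b a p x : ℝ) :
    HasDerivAt (fun s : ℝ => c + b * (s - p) + (1 / 2) * a * (s - p) ^ 2)
      (b + a * (x - p)) x := by
  have hsub : HasDerivAt (fun s : ℝ => s - p) 1 x := (hasDerivAt_id x).sub_const p
  have hsq : HasDerivAt (fun s : ℝ => (s - p) ^ 2) (2 * (x - p)) x := by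
    simpa using hsub.fun_pow 2
  exact (((hsub.const_mul b).const_add c).fun_add (hsq.const_mul ((1 / 2) * a))).congr_deriv
    (by ring)

theorem HasDerivWithinAt.of_mem_imp {g : ℝ → ℝ} {g' x : ℝ} {s : Set ℝ} (hs : IsClosed s)
    (h : x ∈ s → HasDerivWithinAt g g' s x) : HasDerivWithinAt g g' s x := by
  by_cases hx : x ∈ s
  · exact h hx
  · exact HasFDerivWithinAt.of_notMem_closure (by rwa [hs.closure_eq])

theorem HasDerivAt.of_Iic_Icc_Ici {g : ℝ → ℝ} {g' ℓ u x : ℝ} (hℓu : ℓ ≤ u)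
    (hl : x ≤ ℓ → HasDerivWithinAt g g' (Iic ℓ) x)
    (hm : x ∈ Icc ℓ u → HasDerivWithinAt g g' (Icc ℓ u) x)
    (hu : u ≤ x → HasDerivWithinAt g g' (Ici u) x) : HasDerivAt g g' x := by
  have := ((HasDerivWithinAt.of_mem_imp isClosed_Iic hl).union
    (HasDerivWithinAt.of_mem_imp isClosed_Icc hm)).union
    (HasDerivWithinAt.of_mem_imp isClosed_Ici hu)
  rwa [Iic_union_Icc_eq_Iic hℓu, Iic_union_Ici, hasDerivWithinAt_univ] at this

section quadExt

variable {f : ℝ → ℝ} {ℓ u : ℝ}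

theorem quadExt_of_le_left (hℓu : ℓ ≤ u) {s : ℝ} (hs : s ≤ ℓ) :
    quadExt f ℓ u s = f ℓ + deriv f ℓ * (s - ℓ) + (1 / 2) * deriv (deriv f) ℓ * (s - ℓ) ^ 2 := by
  rcases hs.lt_or_eq with hs | rfl
  · simp [quadExt, hs]
  · simp [quadExt, hℓu]

theorem quadExt_of_mem_Icc {s : ℝ} (hs : s ∈ Icc ℓ u) : quadExt f ℓ u s = f s := by
  simp [quadExt, hs.1.not_gt, hs.2]

theorem quadExt_of_right_le (hℓu : ℓ ≤ u) {s : ℝ} (hs : u ≤ s) :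
    quadExt f ℓ u s = f u + deriv f u * (s - u) + (1 / 2) * deriv (deriv f) u * (s - u) ^ 2 := by
  rcases hs.lt_or_eq with hs | rfl
  · simp [quadExt, (hℓu.trans_lt hs).not_gt, hs.not_ge]
  · simp [quadExt, hℓu.not_gt]

theorem hasDerivAt_quadExt (hℓu : ℓ ≤ u) (hf : Differentiable ℝ f) (x : ℝ) :
    HasDerivAt (quadExt f ℓ u) (quadExtDeriv f ℓ u x) x := by
  refine HasDerivAt.of_Iic_Icc_Ici hℓu (fun hx => ?_) (fun hx => ?_) (fun hx => ?_)
  · have hg' : quadExtDeriv f ℓ u x = deriv f ℓ + deriv (deriv f) ℓ * (x - ℓ) := by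
      simp [quadExtDeriv, hx, hx.trans hℓu]
    rw [hg']
    exact (hasDerivAt_quadratic _ _ _ _ x).hasDerivWithinAt.congr
      (fun _ hs => quadExt_of_le_left hℓu hs) (quadExt_of_le_left hℓu hx)
  · have hg' : quadExtDeriv f ℓ u x = deriv f x := by
      simp [quadExtDeriv, hx.1, hx.2]
    rw [hg']
    exact (hf x).hasDerivAt.hasDerivWithinAt.congr
      (fun _ hs => quadExt_of_mem_Icc hs) (quadExt_of_mem_Icc hx)
  · have hg' : quadExtDeriv f ℓ u x = deriv f u + deriv (deriv f) u * (x - u) := by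
      simp [quadExtDeriv, hx, hℓu.trans hx, hℓu]
    rw [hg']
    exact (hasDerivAt_quadratic _ _ _ _ x).hasDerivWithinAt.congr
      (fun _ hs => quadExt_of_right_le hℓu hs) (quadExt_of_right_le hℓu hx)

theorem monotone_quadExtDeriv (hℓu : ℓ ≤ u) (hf' : Differentiable ℝ (deriv f))
    (hf'' : ∀ s ∈ Icc ℓ u, 0 ≤ deriv (deriv f) s) : Monotone (quadExtDeriv f ℓ u) := by
  have hmono : MonotoneOn (deriv f) (Icc ℓ u) :=
    monotoneOn_of_deriv_nonneg (convex_Icc ℓ u) hf'.continuous.continuousOn hf'.differentiableOn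
      fun s hs => hf'' s (interior_subset hs)
  have hclamp_mem (s : ℝ) : max ℓ (min s u) ∈ Icc ℓ u :=
    ⟨le_max_left _ _, max_le hℓu (min_le_right _ _)⟩
  have hclamp : Monotone fun s => deriv f (max ℓ (min s u)) := fun s t hst =>
    hmono (hclamp_mem s) (hclamp_mem t) (by gcongr)
  have hℓ := hf'' ℓ ⟨le_rfl, hℓu⟩
  have hu := hf'' u ⟨hℓu, le_rfl⟩
  have hleft : Monotone fun s : ℝ => deriv (deriv f) ℓ * min (s - ℓ) 0 := fun s t hst => by
    dsimp only; gcongr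
  have hright : Monotone fun s : ℝ => deriv (deriv f) u * max (s - u) 0 := fun s t hst => by
    dsimp only; gcongr
  exact (hclamp.add hleft).add hright

end quadExt

theorem quadExt_convex_general (f : ℝ → ℝ) (ℓ u : ℝ) (hℓu : ℓ ≤ u)
    (hf : ContDiff ℝ 2 f)
    (hf'' : ∀ s ∈ Set.Icc ℓ u, 0 ≤ deriv (deriv f) s) :
    ConvexOn ℝ Set.univ (quadExt f ℓ u) := by
  obtain ⟨hf_diff, -, hf'_C1⟩ := contDiff_succ_iff_deriv.mp (show ContDiff ℝ (1 + 1) f from hf)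
  have hderiv x := hasDerivAt_quadExt hℓu hf_diff x
  have hmono : Monotone (deriv (quadExt f ℓ u)) := by
    rw [funext fun x => (hderiv x).deriv]
    exact monotone_quadExtDeriv hℓu (hf'_C1.differentiable one_ne_zero) hf''
  exact hmono.convexOn_univ_of_deriv fun x => (hderiv x).differentiableAt

theorem quadExt_convex (f : ℝ → ℝ) (ℓ u : ℝ) (hℓu : ℓ ≤ u)
    (hf : ContDiff ℝ 2 f) (hconv : StrictConvexOn ℝ Set.univ f)
    (hf'' : ∀ s ∈ Set.Icc ℓ u, 0 ≤ deriv (deriv f) s) :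
    ConvexOn ℝ Set.univ (quadExt f ℓ u) :=
  quadExt_convex_general f ℓ u hℓu hf hf''
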